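/- Let n ≥ 1 and let A, B, C be real n×n matrices with A and C symmetric positive definite. If the integral operator of the Gaussian kernel θ(A,B,C) is positive semidefinite, then the matrix A − C is positive semidefinite. -/

import Mathlib

/-!
Testing positivity of a continuous kernel `κ` against `f = 1_{B(p,r)} - 1_{B(q,r)}`, dividing by
the squared volume of the balls and letting `r → 0` gives
`Re (κ p p + κ q q - κ q p - κ p q) ≥ 0`. For `κ = θ(A,B,C)`, `p = v` and `q = -v`, the
`B`-term vanishes at all four points (either `x - y = 0` or `x + y = 0`), and the inequality reads
`2 exp(-4 vᵀCv) - 2 exp(-4 vᵀAv) ≥ 0`, that is `vᵀCv ≤ vᵀAv`.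
-/

open MeasureTheory Matrix Complex

noncomputable section

/-- The Gaussian function `θ(A,B,C)(x,y) =
  exp(−(x−y)ᵀA(x−y) − i·(x−y)ᵀB(x+y) − (x+y)ᵀC(x+y))`. -/
def theta {n : ℕ} (A B C : Matrix (Fin n) (Fin n) ℝ) (x y : Fin n → ℝ) : ℂ :=
  Complex.exp (-((((x - y) ⬝ᵥ A.mulVec (x - y)) : ℝ) : ℂ)
    - Complex.I * ((((x - y) ⬝ᵥ B.mulVec (x + y)) : ℝ) : ℂ)
    - ((((x + y) ⬝ᵥ C.mulVec (x + y)) : ℝ) : ℂ))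

/-- The integral operator of the kernel `κ` is positive semidefinite: for every
`f ∈ L²(ℝⁿ,ℂ)`, the integral `∬ κ(x,y) f(y) conj(f(x)) dy dx` is a nonnegative real. -/
def IsPosKernel {n : ℕ} (κ : (Fin n → ℝ) → (Fin n → ℝ) → ℂ) : Prop :=
  ∀ f : (Fin n → ℝ) → ℂ, MemLp f 2 volume →
    0 ≤ (∫ x, ∫ y, κ x y * f y * (starRingEnd ℂ) (f x)).re ∧
      (∫ x, ∫ y, κ x y * f y * (starRingEnd ℂ) (f x)).im = 0

/-- Evaluation of a polynomial in `2n` variables with complex coefficients at real points. -/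
def evalP {n : ℕ} (p : MvPolynomial (Fin n ⊕ Fin n) ℂ) (x y : Fin n → ℝ) : ℂ :=
  MvPolynomial.eval (Sum.elim (fun i => ((x i : ℝ) : ℂ)) (fun i => ((y i : ℝ) : ℂ))) p

open Filter Topology Metric

theorem ContinuousAt.tendsto_setAverage_ball {X E : Type*} [PseudoMetricSpace X]
    [ProperSpace X] [MeasurableSpace X] [OpensMeasurableSpace X]
    [NormedAddCommGroup E] [NormedSpace ℝ E] [CompleteSpace E]
    {μ : Measure X} [IsFiniteMeasureOnCompacts μ] [μ.IsOpenPosMeasure] {g : X → E} {x : X}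
    (hg : ContinuousAt g x) (hgm : StronglyMeasurableAtFilter g (𝓝 x) μ) :
    Tendsto (fun r => ⨍ y in ball x r, g y ∂μ) (𝓝[>] 0) (𝓝 (g x)) := by
  have hballs : Tendsto (ball x) (𝓝[>] 0) (𝓝 x).smallSets :=
    tendsto_smallSets_iff.2 fun _ hu => (eventually_ball_subset hu).filter_mono nhdsWithin_le_nhds
  have hsmall := (hg.integral_sub_linear_isLittleO_ae hgm hballs).tendsto_inv_smul_nhds_zero
  rw [← tendsto_sub_nhds_zero_iff]
  refine hsmall.congr' ?_
  filter_upwards [self_mem_nhdsWithin] with r (hr : 0 < r)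
  have hpos : μ.real (ball x r) ≠ 0 :=
    (ENNReal.toReal_pos (measure_ball_pos μ x hr).ne' measure_ball_lt_top.ne).ne'
  rw [setAverage_eq, smul_sub, inv_smul_smul₀ hpos]

lemma integral_integral_mul_indicator_sub_indicator {α : Type*} [MeasurableSpace α]
    {μ : Measure α} [SFinite μ] {κ : α → α → ℂ} {P Q : Set α}
    (hP : MeasurableSet P) (hQ : MeasurableSet Q)
    (hκ : IntegrableOn (Function.uncurry κ) ((P ∪ Q) ×ˢ (P ∪ Q)) (μ.prod μ)) :
    ∫ x, ∫ y, κ x y * (P.indicator 1 - Q.indicator 1 : α → ℂ) y *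
        starRingEnd ℂ ((P.indicator 1 - Q.indicator 1 : α → ℂ) x) ∂μ ∂μ =
      (∫ z in P ×ˢ P, Function.uncurry κ z ∂μ.prod μ) +
        (∫ z in Q ×ˢ Q, Function.uncurry κ z ∂μ.prod μ) -
        (∫ z in Q ×ˢ P, Function.uncurry κ z ∂μ.prod μ) -
        ∫ z in P ×ˢ Q, Function.uncurry κ z ∂μ.prod μ := by
  set f : α → ℂ := P.indicator 1 - Q.indicator 1
  set K := Function.uncurry κ
  have hint : ∀ S T, S ⊆ P ∪ Q → T ⊆ P ∪ Q → MeasurableSet S → MeasurableSet T →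
      Integrable ((S ×ˢ T).indicator K) (μ.prod μ) := fun S T hS hT hSm hTm =>
    (integrable_indicator_iff (hSm.prod hTm)).2 (hκ.mono_set (Set.prod_mono hS hT))
  have hPP := hint P P Set.subset_union_left Set.subset_union_left hP hP
  have hQQ := hint Q Q Set.subset_union_right Set.subset_union_right hQ hQ
  have hQP := hint Q P Set.subset_union_right Set.subset_union_left hQ hP
  have hPQ := hint P Q Set.subset_union_left Set.subset_union_right hP hQ
  have hexpand : Function.uncurry (fun x y => κ x y * f y * starRingEnd ℂ (f x)) =
      (P ×ˢ P).indicator K + (Q ×ˢ Q).indicator K - (Q ×ˢ P).indicator K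
        - (P ×ˢ Q).indicator K := by
    ext z
    classical
    simp only [f, K, Set.indicator_apply, Set.mem_prod, Pi.sub_apply, Pi.add_apply, Pi.one_apply,
      map_sub, apply_ite (starRingEnd ℂ), map_one, map_zero, ite_and, Function.uncurry]
    split_ifs <;> ring
  rw [integral_integral (hexpand ▸ ((hPP.add hQQ).sub hQP).sub hPQ)]
  change ∫ z, Function.uncurry (fun x y => κ x y * f y * starRingEnd ℂ (f x)) z ∂μ.prod μ = _
  rw [hexpand, integral_sub' ((hPP.add hQQ).sub hQP) hPQ, integral_sub' (hPP.add hQQ) hQP,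
    integral_add' hPP hQQ, integral_indicator (hP.prod hP), integral_indicator (hQ.prod hQ),
    integral_indicator (hQ.prod hP), integral_indicator (hP.prod hQ)]

theorem IsPosKernel.re_add_sub_sub_nonneg {n : ℕ} {κ : (Fin n → ℝ) → (Fin n → ℝ) → ℂ}
    (hκ : IsPosKernel κ) (hcont : Continuous (Function.uncurry κ)) (p q : Fin n → ℝ) :
    0 ≤ (κ p p + κ q q - κ q p - κ p q).re := by
  have : (volume : Measure ((Fin n → ℝ) × (Fin n → ℝ))).IsAddHaarMeasure :=
    Measure.prod.instIsAddHaarMeasure _ _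
  set K := Function.uncurry κ
  set w : ℝ → ℝ := fun r => volume.real (ball (0 : (Fin n → ℝ) × (Fin n → ℝ)) r)
  have havg : ∀ z r, ⨍ y in ball z r, K y = (w r)⁻¹ • ∫ y in ball z r, K y := fun z r => by
    rw [setAverage_eq, Measure.addHaar_real_ball_center]
  have hball (z) : Tendsto (fun r => ⨍ y in ball z r, K y) (𝓝[>] 0) (𝓝 (K z)) :=
    hcont.continuousAt.tendsto_setAverage_ball hcont.aestronglyMeasurable.stronglyMeasurableAtFilter
  have hlim := (((hball (p, p)).add (hball (q, q))).sub (hball (q, p))).sub (hball (p, q))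
  refine ge_of_tendsto ((continuous_re.tendsto _).comp hlim) ?_
  filter_upwards [self_mem_nhdsWithin] with r (hr : 0 < r)
  have hf : MemLp ((ball p r).indicator 1 - (ball q r).indicator 1 : (Fin n → ℝ) → ℂ) 2 volume :=
    (memLp_indicator_const 2 measurableSet_ball 1 (Or.inr measure_ball_lt_top.ne)).sub
      (memLp_indicator_const 2 measurableSet_ball 1 (Or.inr measure_ball_lt_top.ne))
  have hcompact := (isCompact_closedBall p r).union (isCompact_closedBall q r)
  have hsub := Set.union_subset_union (ball_subset_closedBall (x := p) (ε := r))
    (ball_subset_closedBall (x := q) (ε := r))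
  have hK := (hcont.continuousOn.integrableOn_compact (μ := volume)
    (hcompact.prod hcompact)).mono_set (Set.prod_mono hsub hsub)
  have hre := (hκ _ hf).1
  rw [integral_integral_mul_indicator_sub_indicator measurableSet_ball measurableSet_ball hK,
    ball_prod_same, ball_prod_same, ball_prod_same, ball_prod_same] at hre
  rw [Function.comp_apply, havg, havg, havg, havg, ← smul_add, ← smul_sub, ← smul_sub,
    Complex.smul_re, smul_eq_mul]
  exact mul_nonneg (inv_nonneg.2 measureReal_nonneg) hre

lemma continuous_theta {n : ℕ} (A B C : Matrix (Fin n) (Fin n) ℝ) :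
    Continuous (Function.uncurry (theta A B C)) := by
  unfold theta Function.uncurry
  fun_prop

lemma add_self_dotProduct_mulVec_add_self {n : ℕ} (M : Matrix (Fin n) (Fin n) ℝ)
    (x : Fin n → ℝ) : (x + x) ⬝ᵥ M *ᵥ (x + x) = 4 * (x ⬝ᵥ M *ᵥ x) := by
  simp only [← two_smul ℝ x, mulVec_smul, dotProduct_smul, smul_dotProduct, smul_eq_mul]
  ring

lemma theta_self {n : ℕ} (A B C : Matrix (Fin n) (Fin n) ℝ) (x : Fin n → ℝ) :
    theta A B C x x = Real.exp (-(4 * (x ⬝ᵥ C *ᵥ x))) := by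
  rw [theta, sub_self, add_self_dotProduct_mulVec_add_self]
  simp [ofReal_exp]

lemma theta_neg_right {n : ℕ} (A B C : Matrix (Fin n) (Fin n) ℝ) (x : Fin n → ℝ) :
    theta A B C x (-x) = Real.exp (-(4 * (x ⬝ᵥ A *ᵥ x))) := by
  rw [theta, sub_neg_eq_add, add_neg_cancel, add_self_dotProduct_mulVec_add_self]
  simp [ofReal_exp]

lemma theta_neg_neg {n : ℕ} (A B C : Matrix (Fin n) (Fin n) ℝ) (x y : Fin n → ℝ) :
    theta A B C (-x) (-y) = theta A B C x y := by
  simp only [theta, ← neg_add, neg_sub_neg, ← neg_sub y x, mulVec_neg, dotProduct_neg,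
    neg_dotProduct, neg_neg]

theorem posSemidef_sub_of_gaussian_posKernel_general
    {n : ℕ} (A B C : Matrix (Fin n) (Fin n) ℝ)
    (hA : A.PosDef) (hC : C.PosDef)
    (hpos : IsPosKernel (theta A B C)) :
    (A - C).PosSemidef := by
  refine PosSemidef.of_dotProduct_mulVec_nonneg (hA.isHermitian.sub hC.isHermitian) fun v => ?_
  have h := hpos.re_add_sub_sub_nonneg (continuous_theta A B C) v (-v)
  rw [theta_neg_neg, ← theta_neg_neg A B C (-v) v, neg_neg, theta_self, theta_neg_right] at h
  simp only [add_re, sub_re, ofReal_re] at h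
  have hexp : -(4 * (v ⬝ᵥ A *ᵥ v)) ≤ -(4 * (v ⬝ᵥ C *ᵥ v)) := Real.exp_le_exp.1 (by linarith)
  rw [star_trivial, sub_mulVec, dotProduct_sub]
  linarith

theorem posSemidef_sub_of_gaussian_posKernel
    {n : ℕ} (hn : 1 ≤ n) (A B C : Matrix (Fin n) (Fin n) ℝ)
    (hA : A.PosDef) (hC : C.PosDef)
    (hpos : IsPosKernel (theta A B C)) :
    (A - C).PosSemidef :=
  posSemidef_sub_of_gaussian_posKernel_general A B C hA hC hpos
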